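/- Let d = pq with p, q positive integers (not necessarily prime). For every m ∈ ℤ_p and s ∈ ℤ_q, the vector ψ_{ms} := (1/√q) ∑_{k∈ℤ_q} ω_q^{sk} a_{kp+m} equals (1/√p) ω_d^{−ms} ∑_{l∈ℤ_p} ω_p^{−ml} b_{lq+s}, where b_j = (1/√d) ∑_{i∈ℤ_d} ω_d^{ij} a_i. -/

import Mathlib

open Complex Matrix
open scoped ComplexOrder

noncomputable section

/-- `omega n = exp(2 π i / n)`, a primitive `n`-th root of unity. -/
def omega (n : ℕ) : ℂ := Complex.exp (2 * Real.pi * Complex.I / n)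

/-- The standard basis vector `a i` of `ℂ^d`. -/
def stdVec (d : ℕ) (i : Fin d) : Fin d → ℂ := fun k => if k = i then 1 else 0

/-- The Fourier (DFT) basis vector `b j = (1/√d) ∑ i, ω_d^(i j) • a i`. -/
def fourierVec (d : ℕ) (j : Fin d) : Fin d → ℂ :=
  fun i => ((1 / Real.sqrt d : ℝ) : ℂ) * omega d ^ (i.val * j.val)

/-- The rank-one projector `|v⟩⟨v|` of a vector `v`, as a matrix. -/
def proj (d : ℕ) (v : Fin d → ℂ) : Matrix (Fin d) (Fin d) ℂ :=
  Matrix.of fun i k => v i * (starRingEnd ℂ) (v k)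

/-- The Kirkwood-Dirac quasiprobability `Q i j F = ⟨b j|a i⟩ * ⟨a i|F|b j⟩`. -/
def KDQ (d : ℕ) (F : Matrix (Fin d) (Fin d) ℂ) (i j : Fin d) : ℂ :=
  (starRingEnd ℂ) (fourierVec d j i) * ∑ k, F i k * fourierVec d j k

/-- The set `KD⁺` of KD classical density matrices: positive semidefinite, trace one,
and all KD quasiprobabilities are nonnegative reals. -/
def KDplus (d : ℕ) : Set (Matrix (Fin d) (Fin d) ℂ) :=
  {ρ | ρ.PosSemidef ∧ ρ.trace = 1 ∧
    ∀ i j, (KDQ d ρ i j).im = 0 ∧ 0 ≤ (KDQ d ρ i j).re}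

/-- The set `KD^r` of self-adjoint operators whose KD distribution is everywhere real. -/
def KDr (d : ℕ) : Set (Matrix (Fin d) (Fin d) ℂ) :=
  {F | F.IsHermitian ∧ ∀ i j, (KDQ d F i j).im = 0}

/-- `A = {|a i⟩⟨a i| : i ∈ ℤ_d}`. -/
def setA (d : ℕ) : Set (Matrix (Fin d) (Fin d) ℂ) :=
  {M | ∃ i : Fin d, M = proj d (stdVec d i)}

/-- `B = {|b j⟩⟨b j| : j ∈ ℤ_d}`. -/
def setB (d : ℕ) : Set (Matrix (Fin d) (Fin d) ℂ) :=
  {M | ∃ j : Fin d, M = proj d (fourierVec d j)}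

/-- For `d = p * q` : `ψ m s = (1/√q) ∑ k ∈ ℤ_q, ω_q^(s k) • a (k p + m)`
(so the `i`-th coordinate is nonzero iff `i ≡ m [MOD p]`, with `k = i / p`). -/
def psiPQ (d p q : ℕ) (m : Fin p) (s : Fin q) : Fin d → ℂ :=
  fun i => if i.val % p = m.val then
    ((1 / Real.sqrt q : ℝ) : ℂ) * omega q ^ (s.val * (i.val / p)) else 0

/-- For `d = p * q` : `φ m' s' = (1/√p) ∑ k ∈ ℤ_p, ω_p^(s' k) • a (k q + m')`. -/
def phiPQ (d p q : ℕ) (m' : Fin q) (s' : Fin p) : Fin d → ℂ :=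
  fun i => if i.val % q = m'.val then
    ((1 / Real.sqrt p : ℝ) : ℂ) * omega p ^ (s'.val * (i.val / q)) else 0

/-- For `d = p ^ 2` : `C = {|ψ m s⟩⟨ψ m s| : m, s ∈ ℤ_p}`. -/
def setC2 (d p : ℕ) : Set (Matrix (Fin d) (Fin d) ℂ) :=
  {M | ∃ m s : Fin p, M = proj d (psiPQ d p p m s)}

/-- For `d = p * q` : `C = {|ψ m s⟩⟨ψ m s| : m ∈ ℤ_p, s ∈ ℤ_q}`. -/
def setC (d p q : ℕ) : Set (Matrix (Fin d) (Fin d) ℂ) :=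
  {M | ∃ (m : Fin p) (s : Fin q), M = proj d (psiPQ d p q m s)}

/-- For `d = p * q` : `D = {|φ m' s'⟩⟨φ m' s'| : m' ∈ ℤ_q, s' ∈ ℤ_p}`. -/
def setD (d p q : ℕ) : Set (Matrix (Fin d) (Fin d) ℂ) :=
  {M | ∃ (m' : Fin q) (s' : Fin p), M = proj d (phiPQ d p q m' s')}

/-- Matrix entries in the Fourier basis: `⟨b k|G|b j⟩`. -/
def entryB (d : ℕ) (G : Matrix (Fin d) (Fin d) ℂ) (k j : Fin d) : ℂ :=
  ∑ i, ∑ l, (starRingEnd ℂ) (fourierVec d k i) * G i l * fourierVec d j l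

/-!
The `i`-th coordinate of `b (l q + s)` is `ω_d ^ (i s) ω_p ^ (i l) / √d`, so the sum over `l`
is the character sum `∑ l, ω_p ^ ((i - m) l)`, which is `p` if `i ≡ m [MOD p]` and `0`
otherwise. On the surviving coordinates `i = m + k p` the remaining phase `ω_d ^ ((i - m) s)`
is `ω_q ^ (s k)`.
-/

lemma omega_ne_zero (n : ℕ) : omega n ≠ 0 :=
  Complex.exp_ne_zero _

lemma isPrimitiveRoot_omega {n : ℕ} (hn : n ≠ 0) : IsPrimitiveRoot (omega n) n :=
  Complex.isPrimitiveRoot_exp n hn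

lemma omega_mul_pow_right {p q : ℕ} (hp : p ≠ 0) (hq : q ≠ 0) :
    omega (p * q) ^ q = omega p := by
  rw [omega, omega, ← Complex.exp_nat_mul]
  congr 1
  push_cast
  field_simp

lemma omega_mul_pow_left {p q : ℕ} (hp : p ≠ 0) (hq : q ≠ 0) :
    omega (p * q) ^ p = omega q := by
  rw [mul_comm]
  exact omega_mul_pow_right hq hp

lemma IsPrimitiveRoot.sum_zpow_pow_eq_ite {K : Type*} [Field K] {ζ : K} {n : ℕ}
    (hζ : IsPrimitiveRoot ζ n) (a : ℤ) [Decidable ((n : ℤ) ∣ a)] :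
    ∑ l ∈ Finset.range n, (ζ ^ a) ^ l = if (n : ℤ) ∣ a then (n : K) else 0 := by
  split_ifs with ha
  · simp [(hζ.zpow_eq_one_iff_dvd a).mpr ha]
  · have hne : ζ ^ a ≠ 1 := mt (hζ.zpow_eq_one_iff_dvd a).mp ha
    have hpow : (ζ ^ a) ^ n = 1 := by
      rw [← zpow_natCast, ← _root_.zpow_mul, mul_comm, _root_.zpow_mul, hζ.zpow_eq_one,
        _root_.one_zpow]
    rw [geom_sum_eq hne, hpow, sub_self, zero_div]

lemma natCast_dvd_sub_iff_mod_eq {p i m : ℕ} (hm : m < p) :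
    (p : ℤ) ∣ (i : ℤ) - m ↔ i % p = m := by
  rw [← Nat.modEq_iff_dvd, Nat.ModEq, Nat.mod_eq_of_lt hm, eq_comm]

lemma fourierVec_apply_mul_add {p q d : ℕ} (hp : p ≠ 0) (hq : q ≠ 0) (hd : d = p * q)
    (i : Fin d) (l s : ℕ) (hj : (l * q + s) % d < d) :
    fourierVec d ⟨(l * q + s) % d, hj⟩ i =
      ((1 / Real.sqrt d : ℝ) : ℂ) * (omega p ^ (i.val * l) * omega d ^ (i.val * s)) := by
  subst hd
  have hω := isPrimitiveRoot_omega (mul_ne_zero hp hq)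
  have hmod : omega (p * q) ^ ((l * q + s) % (p * q)) = omega (p * q) ^ (l * q + s) := by
    have h := pow_mod_orderOf (omega (p * q)) (l * q + s)
    rwa [← hω.eq_orderOf] at h
  simp only [fourierVec]
  rw [pow_mul', hmod, ← pow_mul', mul_add, pow_add, ← omega_mul_pow_right hp hq, ← pow_mul]
  ring_nf

lemma sum_omega_zpow_mul_fourierVec {p q d : ℕ} (hp : 0 < p) (hq : 0 < q) (hd : d = p * q)
    (m s : ℕ) (i : Fin d) :
    ∑ l : Fin p, omega p ^ (-(m * l.val : ℤ)) *
        fourierVec d ⟨(l.val * q + s) % d, Nat.mod_lt _ (hd ▸ Nat.mul_pos hp hq)⟩ i =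
      ((1 / Real.sqrt d : ℝ) : ℂ) * omega d ^ (i.val * s) *
        if (p : ℤ) ∣ (i.val : ℤ) - m then (p : ℂ) else 0 := by
  rw [← (isPrimitiveRoot_omega hp.ne').sum_zpow_pow_eq_ite, Finset.mul_sum,
    ← Fin.sum_univ_eq_sum_range]
  refine Finset.sum_congr rfl fun l _ => ?_
  have hphase : omega p ^ (-(m * l.val : ℤ)) * omega p ^ (i.val * l.val) =
      (omega p ^ ((i.val : ℤ) - m)) ^ l.val := by
    rw [← zpow_natCast, ← zpow_natCast, ← _root_.zpow_mul, ← zpow_add₀ (omega_ne_zero p)]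
    push_cast
    ring_nf
  rw [fourierVec_apply_mul_add hp.ne' hq.ne' hd, ← hphase]
  ring

lemma one_div_sqrt_mul_one_div_sqrt_mul_self {p q : ℕ} (hp : p ≠ 0) :
    (1 / Real.sqrt p) * (1 / Real.sqrt (p * q)) * p = 1 / Real.sqrt q := by
  rw [Real.sqrt_mul (Nat.cast_nonneg p)]
  have h1 : Real.sqrt p ≠ 0 := by positivity
  field_simp
  rw [Real.sq_sqrt (Nat.cast_nonneg p)]

lemma omega_mul_zpow_neg_mul_mul_pow {p q i m : ℕ} (hp : p ≠ 0) (hq : q ≠ 0) (h : i % p = m)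
    (s : ℕ) :
    omega (p * q) ^ (-(m * s : ℤ)) * omega (p * q) ^ (i * s) = omega q ^ (s * (i / p)) := by
  conv_lhs => rw [← Nat.mod_add_div i p, h]
  rw [add_mul, pow_add, _root_.zpow_neg, ← Nat.cast_mul, zpow_natCast, inv_mul_cancel_left₀
    (pow_ne_zero _ (omega_ne_zero _)), mul_assoc, pow_mul, omega_mul_pow_left hp hq, mul_comm]

/-- For `d = pq` (`p, q` positive integers), for every `m ∈ ℤ_p`,
`s ∈ ℤ_q`, `ψ_{ms} = (1/√p) ω_d^{−ms} ∑_{l ∈ ℤ_p} ω_p^{−ml} b_{lq+s}`. -/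
theorem stmt13 (p q d : ℕ) (hp : 0 < p) (hq : 0 < q) (hd : d = p * q)
    (m : Fin p) (s : Fin q) :
    psiPQ d p q m s = fun i =>
      ((1 / Real.sqrt p : ℝ) : ℂ) * omega d ^ (-(m.val * s.val : ℤ)) *
        ∑ l : Fin p, omega p ^ (-(m.val * l.val : ℤ)) *
          fourierVec d ⟨(l.val * q + s.val) % d, Nat.mod_lt _ (by rw [hd]; exact Nat.mul_pos hp hq)⟩ i := by
  funext i
  rw [sum_omega_zpow_mul_fourierVec hp hq hd]
  subst hd
  by_cases h : i.val % p = m.val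
  · have hscale : ((1 / Real.sqrt q : ℝ) : ℂ) =
        ((1 / Real.sqrt p : ℝ) : ℂ) * ((1 / Real.sqrt (p * q : ℕ) : ℝ) : ℂ) * p := by
      rw [← one_div_sqrt_mul_one_div_sqrt_mul_self (q := q) hp.ne']
      push_cast
      ring
    rw [if_pos ((natCast_dvd_sub_iff_mod_eq m.isLt).mpr h), psiPQ, if_pos h, hscale,
      ← omega_mul_zpow_neg_mul_mul_pow hp.ne' hq.ne' h]
    ring
  · rw [if_neg (mt (natCast_dvd_sub_iff_mod_eq m.isLt).mp h), psiPQ, if_neg h, mul_zero, mul_zero]
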